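/- arXiv:2506.08689 — 3 statements merged into one kernel-verified Lean document; each statement's English description precedes it below -/
import Mathlib

section
/- Let X ⊆ ℝ^d be Borel, ρ ≥ 1, and let P, Q be Borel probability measures on X with finite ρ-th moments. For any measurable function f : X → Y ⊆ ℝ^q such that f#P and f#Q have finite ρ-th moments, the ρ-Wasserstein distance between the pushforward measures satisfies W_ρ(f#P, f#Q) = ( inf_{γ ∈ Γ(P,Q)} ∫_{X×X} ‖f(x) − f(y)‖^ρ dγ(x,y) )^{1/ρ}, where Γ(P,Q) is the set of couplings of P and Q. -/
open MeasureTheory ENNReal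

noncomputable section

/-- `ℝ^d` with the Euclidean norm. -/
abbrev Euc (d : ℕ) : Type := EuclideanSpace ℝ (Fin d)

/-- The set of couplings `Γ(μ, ν)` of two measures: probability measures on the product
whose first marginal is `μ` and second marginal is `ν`. -/
def Couplings {β : Type*} [MeasurableSpace β] (μ ν : Measure β) :
    Set (Measure (β × β)) :=
  {γ | IsProbabilityMeasure γ ∧ γ.map Prod.fst = μ ∧ γ.map Prod.snd = ν}

/-- The ρ-Wasserstein distance
`W_ρ(μ, ν) = (inf_{γ ∈ Γ(μ,ν)} ∫ ‖x - y‖^ρ dγ(x,y))^{1/ρ}`. -/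
noncomputable def Wass {β : Type*} [MeasurableSpace β] [NormedAddCommGroup β]
    (ρ : ℝ) (μ ν : Measure β) : ℝ :=
  ((⨅ γ ∈ Couplings μ ν, ∫⁻ p, ENNReal.ofReal (‖p.1 - p.2‖ ^ ρ) ∂γ).toReal) ^ (1/ρ)

/-- `μ` has finite ρ-th moment: `∫ ‖x‖^ρ dμ(x) < ∞`. -/
def HasFiniteMoment {β : Type*} [MeasurableSpace β] [NormedAddCommGroup β]
    (ρ : ℝ) (μ : Measure β) : Prop :=
  ∫⁻ x, ENNReal.ofReal (‖x‖ ^ ρ) ∂μ < ⊤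

/-- A measurable partition of a set `X` into `N` regions. -/
def IsMeasPartition {β : Type*} [MeasurableSpace β] {N : ℕ}
    (R : Fin N → Set β) (X : Set β) : Prop :=
  (∀ i, MeasurableSet (R i)) ∧ (⋃ i, R i) = X ∧ ∀ i j, i ≠ j → R i ∩ R j = ∅

/-- The quantization operator `Δ_{R,C}(x) = Σ_i c_i 1_{R_i}(x)`. -/
noncomputable def quantMap {β : Type*} [AddCommMonoid β] {N : ℕ}
    (R : Fin N → Set β) (c : Fin N → β) (x : β) : β :=
  ∑ i, (R i).indicator (fun _ => c i) x

/-! A coupling `γ` of `P` and `Q` pushes forward under `f × f` to a coupling of `f#P` and `f#Q`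
with the same cost. Conversely, a coupling `η` of `f#P` and `f#Q` lifts to one of `P` and `Q`:
draw `(a, b) ∼ η`, then `x` and `y` independently from the conditional laws of `P` given `f = a`
and of `Q` given `f = b`. These conditional laws are carried by the fibres `f⁻¹ {a}`,
`f⁻¹ {b}`, so the lift pushes forward to `η` again. Hence both infima run over the same
costs. -/

open ProbabilityTheory

namespace MeasureTheory.Measure

variable {α β γ δ : Type*} [MeasurableSpace α] [MeasurableSpace β] [MeasurableSpace γ]
  [MeasurableSpace δ]

lemma map_fst_comp_parallelComp (η : Measure (α × γ)) (κ : Kernel α β) (ξ : Kernel γ δ)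
    [IsSFiniteKernel κ] [IsMarkovKernel ξ] :
    ((κ ∥ₖ ξ) ∘ₘ η).map Prod.fst = κ ∘ₘ η.map Prod.fst := by
  ext s hs
  rw [map_apply measurable_fst hs, bind_apply (measurable_fst hs) (Kernel.aemeasurable _),
    bind_apply hs (Kernel.aemeasurable _), lintegral_map (κ.measurable_coe hs) measurable_fst]
  congr with p
  rw [← Set.prod_univ, Kernel.parallelComp_apply_prod, measure_univ, mul_one]

lemma map_snd_comp_parallelComp (η : Measure (α × γ)) (κ : Kernel α β) (ξ : Kernel γ δ)
    [IsMarkovKernel κ] [IsSFiniteKernel ξ] :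
    ((κ ∥ₖ ξ) ∘ₘ η).map Prod.snd = ξ ∘ₘ η.map Prod.snd := by
  ext s hs
  rw [map_apply measurable_snd hs, bind_apply (measurable_snd hs) (Kernel.aemeasurable _),
    bind_apply hs (Kernel.aemeasurable _), lintegral_map (ξ.measurable_coe hs) measurable_snd]
  congr with p
  rw [← Set.univ_prod, Kernel.parallelComp_apply_prod, measure_univ, one_mul]

end MeasureTheory.Measure

section Fibers

variable {α β : Type*} [MeasurableSpace α] [StandardBorelSpace α] [Nonempty α]
  [MeasurableSpace β] [StandardBorelSpace β] [Nonempty β] {f : α → β}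

lemma condDistrib_id_map_ae_eq_id (μ : Measure α) [IsFiniteMeasure μ] (hf : Measurable f) :
    (condDistrib id f μ).map f =ᵐ[μ.map f] Kernel.id := by
  filter_upwards [condDistrib_comp f aemeasurable_id hf, condDistrib_self (μ := μ) f]
    with y hcomp hself
  rw [← hcomp]
  exact hself

lemma map_prodMap_comp_parallelComp_condDistrib (μ ν : Measure α) [IsFiniteMeasure μ]
    [IsFiniteMeasure ν] (hf : Measurable f) {η : Measure (β × β)}
    (hη₁ : η.map Prod.fst = μ.map f) (hη₂ : η.map Prod.snd = ν.map f) :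
    ((condDistrib id f μ ∥ₖ condDistrib id f ν) ∘ₘ η).map (Prod.map f f) = η := by
  have hμ : ∀ᵐ p ∂η, (condDistrib id f μ).map f p.1 = Measure.dirac p.1 := by
    have h := condDistrib_id_map_ae_eq_id μ hf
    rw [← hη₁] at h
    exact ae_of_ae_map measurable_fst.aemeasurable h
  have hν : ∀ᵐ p ∂η, (condDistrib id f ν).map f p.2 = Measure.dirac p.2 := by
    have h := condDistrib_id_map_ae_eq_id ν hf
    rw [← hη₂] at h
    exact ae_of_ae_map measurable_snd.aemeasurable h
  rw [Measure.map_comp _ _ (hf.prodMap hf)]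
  conv_rhs => rw [← Measure.id_comp (μ := η)]
  refine Measure.comp_congr ?_
  filter_upwards [hμ, hν] with p hp₁ hp₂
  rw [Kernel.map_apply _ (hf.prodMap hf), Kernel.parallelComp_apply,
    ← Measure.map_prod_map _ _ hf hf, ← Kernel.map_apply _ hf, ← Kernel.map_apply _ hf,
    hp₁, hp₂, Measure.dirac_prod_dirac, Kernel.id_apply]

lemma image_map_prodMap_couplings (μ ν : Measure α) [IsFiniteMeasure μ] [IsFiniteMeasure ν]
    (hf : Measurable f) :
    (fun γ => γ.map (Prod.map f f)) '' Couplings μ ν = Couplings (μ.map f) (ν.map f) := by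
  ext η
  constructor
  · rintro ⟨γ, ⟨hγ, hγ₁, hγ₂⟩, rfl⟩
    refine ⟨Measure.isProbabilityMeasure_map (hf.prodMap hf).aemeasurable, ?_, ?_⟩
    · rw [Measure.map_map measurable_fst (hf.prodMap hf), ← hγ₁,
        Measure.map_map hf measurable_fst]
      rfl
    · rw [Measure.map_map measurable_snd (hf.prodMap hf), ← hγ₂,
        Measure.map_map hf measurable_snd]
      rfl
  · rintro ⟨hη, hη₁, hη₂⟩
    refine ⟨_, ⟨inferInstance, ?_, ?_⟩,
      map_prodMap_comp_parallelComp_condDistrib μ ν hf hη₁ hη₂⟩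
    · rw [Measure.map_fst_comp_parallelComp, hη₁,
        condDistrib_comp_map hf.aemeasurable aemeasurable_id, Measure.map_id]
    · rw [Measure.map_snd_comp_parallelComp, hη₂,
        condDistrib_comp_map hf.aemeasurable aemeasurable_id, Measure.map_id]

end Fibers

theorem stmt0_general {d q : ℕ} (ρ : ℝ)
    (P Q : Measure (Euc d))
    (hP : IsProbabilityMeasure P) (hQ : IsProbabilityMeasure Q)
    (f : Euc d → Euc q) (hf : Measurable f) :
    Wass ρ (P.map f) (Q.map f) =
      ((⨅ γ ∈ Couplings P Q,
          ∫⁻ p, ENNReal.ofReal (‖f p.1 - f p.2‖ ^ ρ) ∂γ).toReal) ^ (1/ρ) := by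
  have hcost : Measurable fun p : Euc q × Euc q => ENNReal.ofReal (‖p.1 - p.2‖ ^ ρ) := by
    fun_prop
  rw [Wass, ← image_map_prodMap_couplings P Q hf, iInf_image]
  simp_rw [lintegral_map hcost (hf.prodMap hf)]
  rfl

/-- For Borel probability measures `P`, `Q` on `X ⊆ ℝ^d` with finite ρ-th
moments and a measurable `f : X → Y ⊆ ℝ^q` whose pushforwards have finite ρ-th moments,
`W_ρ(f#P, f#Q) = (inf_{γ ∈ Γ(P,Q)} ∫ ‖f(x) - f(y)‖^ρ dγ(x,y))^{1/ρ}`. -/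
theorem stmt0 {d q : ℕ} (ρ : ℝ) (hρ : 1 ≤ ρ)
    (X : Set (Euc d)) (hXm : MeasurableSet X) (Y : Set (Euc q))
    (P Q : Measure (Euc d))
    (hP : IsProbabilityMeasure P) (hQ : IsProbabilityMeasure Q)
    (hPX : P X = 1) (hQX : Q X = 1)
    (hPm : HasFiniteMoment ρ P) (hQm : HasFiniteMoment ρ Q)
    (f : Euc d → Euc q) (hf : Measurable f) (hfXY : Set.MapsTo f X Y)
    (hfPm : HasFiniteMoment ρ (P.map f)) (hfQm : HasFiniteMoment ρ (Q.map f)) :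
    Wass ρ (P.map f) (Q.map f) =
      ((⨅ γ ∈ Couplings P Q,
          ∫⁻ p, ENNReal.ofReal (‖f p.1 - f p.2‖ ^ ρ) ∂γ).toReal) ^ (1/ρ) :=
  stmt0_general ρ P Q hP hQ f hf
end
end

section
/- Let X ⊆ ℝ^d, ρ ≥ 1, P a Borel probability measure on X with finite ρ-th moment, R = {R_1,…,R_N} a measurable partition of X, and C = {c_1,…,c_N} ⊂ X a set of locations. Let f : X → Y ⊆ ℝ^q be measurable, and for each k let π_k := P(R_k) and let α_k, β_k ≥ 0 satisfy ‖f(x) − f(c_k)‖^ρ ≤ α_k ‖x − c_k‖^ρ + β_k for all x ∈ X. Define θ_d := ( Σ_{k=1}^N ∫_{R_k} ‖x − c_k‖^ρ dP(x) )^{1/ρ} and α_max := max_{k} α_k. Then for any θ ≥ 0, sup_{Q ∈ B_θ(P)} W_ρ(f#Q, f#Δ_{R,C}#P) ≤ ( α_max (θ + θ_d)^ρ + Σ_{k=1}^N π_k β_k )^{1/ρ}. -/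
open MeasureTheory ENNReal

noncomputable section

/-!
Take any coupling `π` of `P` and `Q` and push it forward along `(x, y) ↦ (f y, f (Δ x))`, where
`Δ = Δ_{R,C}`: this couples `f#Q` with `f#Δ#P`. For `x ∈ R_k` the linearization bound gives
`‖f y - f (Δ x)‖^ρ ≤ α_max ‖y - Δ x‖^ρ + β_k`, and Minkowski's inequality in `L^ρ(π)` bounds the
`ρ`-th moment of `y - Δ x` by `((cost π)^{1/ρ} + θ_d)^ρ`. The resulting bound on the optimal cost
between `f#Q` and `f#Δ#P` is monotone and continuous in `cost π`, so it passes to the infimum over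
`π`, which is at most `θ^ρ`.
-/

section Couplings

variable {β : Type*} [MeasurableSpace β] {μ ν : Measure β} {π : Measure (β × β)}

lemma prod_mem_couplings [IsProbabilityMeasure μ] [IsProbabilityMeasure ν] :
    μ.prod ν ∈ Couplings μ ν :=
  ⟨inferInstance, Measure.fst_prod, Measure.snd_prod⟩

lemma map_swap_mem_couplings {F : Type*} [MeasurableSpace F] (hπ : π ∈ Couplings μ ν)
    {g h : β → F} (hg : Measurable g) (hh : Measurable h) :
    π.map (fun p => (g p.2, h p.1)) ∈ Couplings (ν.map g) (μ.map h) := by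
  obtain ⟨hprob, hfst, hsnd⟩ := hπ
  have hm : Measurable fun p : β × β => (g p.2, h p.1) := by fun_prop
  refine ⟨Measure.isProbabilityMeasure_map hm.aemeasurable, ?_, ?_⟩
  · rw [Measure.map_map measurable_fst hm, ← hsnd, Measure.map_map hg measurable_snd]
    rfl
  · rw [Measure.map_map measurable_snd hm, ← hfst, Measure.map_map hh measurable_fst]
    rfl

lemma lintegral_comp_fst_of_mem_couplings (hπ : π ∈ Couplings μ ν) {g : β → ℝ≥0∞}
    (hg : Measurable g) : ∫⁻ p, g p.1 ∂π = ∫⁻ x, g x ∂μ := by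
  rw [← hπ.2.1, lintegral_map hg measurable_fst]

lemma lintegral_comp_snd_of_mem_couplings (hπ : π ∈ Couplings μ ν) {g : β → ℝ≥0∞}
    (hg : Measurable g) : ∫⁻ p, g p.2 ∂π = ∫⁻ x, g x ∂ν := by
  rw [← hπ.2.2, lintegral_map hg measurable_snd]

lemma ae_fst_of_mem_couplings (hπ : π ∈ Couplings μ ν) {s : β → Prop} (hs : ∀ᵐ x ∂μ, s x) :
    ∀ᵐ p ∂π, s p.1 :=
  ae_of_ae_map measurable_fst.aemeasurable (hπ.2.1 ▸ hs)

lemma ae_snd_of_mem_couplings (hπ : π ∈ Couplings μ ν) {s : β → Prop} (hs : ∀ᵐ x ∂ν, s x) :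
    ∀ᵐ p ∂π, s p.2 :=
  ae_of_ae_map measurable_snd.aemeasurable (hπ.2.2 ▸ hs)

end Couplings

lemma ofReal_norm_sub_rpow_le {E : Type*} [SeminormedAddGroup E] {ρ : ℝ} (hρ : 1 ≤ ρ)
    (x y : E) :
    ENNReal.ofReal (‖x - y‖ ^ ρ) ≤
      2 ^ (ρ - 1) * (ENNReal.ofReal (‖x‖ ^ ρ) + ENNReal.ofReal (‖y‖ ^ ρ)) := by
  simp only [← ofReal_rpow_of_nonneg (norm_nonneg _) (zero_le_one.trans hρ)]
  calc ENNReal.ofReal ‖x - y‖ ^ ρ ≤ (ENNReal.ofReal ‖x‖ + ENNReal.ofReal ‖y‖) ^ ρ := by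
        gcongr
        exact (ofReal_le_ofReal (norm_sub_le x y)).trans ofReal_add_le
    _ ≤ _ := rpow_add_le_mul_rpow_add_rpow _ _ hρ

section Moments

variable {E : Type*} [NormedAddCommGroup E] [MeasurableSpace E] {ρ : ℝ}

lemma lintegral_ofReal_norm_sub_rpow_lt_top [OpensMeasurableSpace E] {μ : Measure E}
    [IsFiniteMeasure μ] (hρ : 1 ≤ ρ) (hμ : HasFiniteMoment ρ μ) (v : E) :
    ∫⁻ x, ENNReal.ofReal (‖x - v‖ ^ ρ) ∂μ < ∞ := by
  calc ∫⁻ x, ENNReal.ofReal (‖x - v‖ ^ ρ) ∂μ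
      ≤ ∫⁻ x, 2 ^ (ρ - 1) * (ENNReal.ofReal (‖x‖ ^ ρ) + ENNReal.ofReal (‖v‖ ^ ρ)) ∂μ :=
        lintegral_mono fun x => ofReal_norm_sub_rpow_le hρ x v
    _ = 2 ^ (ρ - 1) *
          (∫⁻ x, ENNReal.ofReal (‖x‖ ^ ρ) ∂μ + ENNReal.ofReal (‖v‖ ^ ρ) * μ Set.univ) := by
        rw [lintegral_const_mul _ (by fun_prop), lintegral_add_right _ measurable_const,
          lintegral_const]
    _ < ∞ := by
        refine mul_lt_top (rpow_ne_top_of_ne_zero two_ne_zero ofNat_ne_top).lt_top ?_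
        exact add_lt_top.2 ⟨hμ, mul_lt_top ofReal_lt_top (measure_lt_top μ _)⟩

lemma ofReal_sum_setIntegral_norm_sub_rpow [OpensMeasurableSpace E] {μ : Measure E}
    [IsFiniteMeasure μ] (hρ : 1 ≤ ρ) (hμ : HasFiniteMoment ρ μ) {N : ℕ} (R : Fin N → Set E)
    (c : Fin N → E) :
    ENNReal.ofReal (∑ k, ∫ x in R k, ‖x - c k‖ ^ ρ ∂μ) =
      ∑ k, ∫⁻ x in R k, ENNReal.ofReal (‖x - c k‖ ^ ρ) ∂μ := by
  have hfin : ∀ k ∈ Finset.univ, ∫⁻ x in R k, ENNReal.ofReal (‖x - c k‖ ^ ρ) ∂μ ≠ ∞ :=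
    fun k _ => ne_top_of_le_ne_top (lintegral_ofReal_norm_sub_rpow_lt_top hρ hμ (c k)).ne
      (setLIntegral_le_lintegral _ _)
  rw [← ofReal_toReal (sum_ne_top.2 hfin), toReal_sum hfin]
  congr 1
  exact Finset.sum_congr rfl fun k _ =>
    integral_eq_lintegral_of_nonneg_ae (.of_forall fun _ => by positivity)
      ((continuous_sub_right (c k)).norm.measurable.pow_const ρ).aestronglyMeasurable

end Moments

lemma lintegral_ofReal_norm_sub_rpow_le {α E : Type*} [MeasurableSpace α] {μ : Measure α}
    [NormedAddCommGroup E] [MeasurableSpace E] [BorelSpace E] [SecondCountableTopology E]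
    {ρ : ℝ} (hρ : 1 ≤ ρ) {u v w : α → E} (hu : Measurable u) (hv : Measurable v)
    (hw : Measurable w) :
    ∫⁻ x, ENNReal.ofReal (‖u x - w x‖ ^ ρ) ∂μ ≤
      ((∫⁻ x, ENNReal.ofReal (‖u x - v x‖ ^ ρ) ∂μ) ^ (1 / ρ) +
        (∫⁻ x, ENNReal.ofReal (‖v x - w x‖ ^ ρ) ∂μ) ^ (1 / ρ)) ^ ρ := by
  have hρ0 : 0 < ρ := zero_lt_one.trans_le hρ
  simp only [← ofReal_rpow_of_nonneg (norm_nonneg _) hρ0.le]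
  rw [← rpow_inv_le_iff hρ0, ← one_div]
  calc (∫⁻ x, ENNReal.ofReal ‖u x - w x‖ ^ ρ ∂μ) ^ (1 / ρ)
      ≤ (∫⁻ x, ((fun x => ENNReal.ofReal ‖u x - v x‖) + fun x => ENNReal.ofReal ‖v x - w x‖) x
          ^ ρ ∂μ) ^ (1 / ρ) := by
        gcongr with x
        exact (ofReal_le_ofReal (norm_sub_le_norm_sub_add_norm_sub _ _ _)).trans
          ofReal_add_le
    _ ≤ _ := lintegral_Lp_add_le (by fun_prop) (by fun_prop) hρ

section TransportCost

variable {E : Type*} [NormedAddCommGroup E] [MeasurableSpace E]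

def transportCost (ρ : ℝ) (π : Measure (E × E)) : ℝ≥0∞ :=
  ∫⁻ p, ENNReal.ofReal (‖p.1 - p.2‖ ^ ρ) ∂π

/-- `Wass ρ μ ν = (optimalCost ρ μ ν).toReal ^ (1 / ρ)` holds definitionally. -/
def optimalCost (ρ : ℝ) (μ ν : Measure E) : ℝ≥0∞ :=
  ⨅ π ∈ Couplings μ ν, transportCost ρ π

variable {ρ : ℝ} {μ ν : Measure E}

lemma transportCost_lt_top [OpensMeasurableSpace E] {π : Measure (E × E)}
    (hρ : 1 ≤ ρ) (hπ : π ∈ Couplings μ ν) (hμ : HasFiniteMoment ρ μ)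
    (hν : HasFiniteMoment ρ ν) : transportCost ρ π < ∞ := by
  have hm : Measurable fun x : E => ENNReal.ofReal (‖x‖ ^ ρ) := by fun_prop
  calc transportCost ρ π
      ≤ ∫⁻ p, 2 ^ (ρ - 1) * (ENNReal.ofReal (‖p.1‖ ^ ρ) + ENNReal.ofReal (‖p.2‖ ^ ρ)) ∂π :=
        lintegral_mono fun p => ofReal_norm_sub_rpow_le hρ p.1 p.2
    _ = 2 ^ (ρ - 1) *
          (∫⁻ x, ENNReal.ofReal (‖x‖ ^ ρ) ∂μ + ∫⁻ x, ENNReal.ofReal (‖x‖ ^ ρ) ∂ν) := by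
        rw [lintegral_const_mul _ (by fun_prop), lintegral_add_left (by fun_prop),
          lintegral_comp_fst_of_mem_couplings hπ hm, lintegral_comp_snd_of_mem_couplings hπ hm]
    _ < ∞ :=
        mul_lt_top (rpow_ne_top_of_ne_zero two_ne_zero ofNat_ne_top).lt_top
          (add_lt_top.2 ⟨hμ, hν⟩)

lemma optimalCost_le_transportCost {π : Measure (E × E)} (hπ : π ∈ Couplings μ ν) :
    optimalCost ρ μ ν ≤ transportCost ρ π :=
  iInf₂_le π hπ

lemma optimalCost_lt_top [OpensMeasurableSpace E] [IsProbabilityMeasure μ]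
    [IsProbabilityMeasure ν] (hρ : 1 ≤ ρ) (hμ : HasFiniteMoment ρ μ)
    (hν : HasFiniteMoment ρ ν) : optimalCost ρ μ ν < ∞ :=
  (optimalCost_le_transportCost prod_mem_couplings).trans_lt
    (transportCost_lt_top hρ prod_mem_couplings hμ hν)

/-- An infinite optimal cost would be read by `Wass` as `∞.toReal = 0`. -/
lemma optimalCost_le_of_Wass_le {θ : ℝ} (hρ : 0 < ρ) (hfin : optimalCost ρ μ ν ≠ ∞)
    (hW : Wass ρ μ ν ≤ θ) : optimalCost ρ μ ν ≤ ENNReal.ofReal (θ ^ ρ) := by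
  rw [← ofReal_toReal hfin]
  refine ofReal_le_ofReal ?_
  calc (optimalCost ρ μ ν).toReal = ((optimalCost ρ μ ν).toReal ^ (1 / ρ)) ^ ρ := by
        rw [← Real.rpow_mul toReal_nonneg, one_div_mul_cancel hρ.ne', Real.rpow_one]
    _ ≤ θ ^ ρ := Real.rpow_le_rpow (by positivity) hW hρ.le

lemma Wass_le_of_optimalCost_le {B : ℝ} (hρ : 0 ≤ ρ) (hB : 0 ≤ B)
    (h : optimalCost ρ μ ν ≤ ENNReal.ofReal B) : Wass ρ μ ν ≤ B ^ (1 / ρ) :=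
  Real.rpow_le_rpow toReal_nonneg (toReal_le_of_le_ofReal hB h) (one_div_nonneg.2 hρ)

lemma le_map_optimalCost [IsProbabilityMeasure μ] [IsProbabilityMeasure ν]
    {G : ℝ≥0∞ → ℝ≥0∞} (hG : Monotone G) (hGc : Continuous G) {A : ℝ≥0∞}
    (h : ∀ π ∈ Couplings μ ν, A ≤ G (transportCost ρ π)) : A ≤ G (optimalCost ρ μ ν) := by
  have : Nonempty (Couplings μ ν) := ⟨⟨_, prod_mem_couplings⟩⟩
  rw [optimalCost, iInf_subtype', hG.map_ciInf_of_continuousAt hGc.continuousAt]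
  exact le_iInf fun π => h π π.2

end TransportCost

namespace IsMeasPartition

variable {β : Type*} [MeasurableSpace β] {N : ℕ} {R : Fin N → Set β} {X : Set β}

lemma exists_mem (hR : IsMeasPartition R X) {x : β} (hx : x ∈ X) : ∃ k, x ∈ R k := by
  rw [← hR.2.1] at hx
  exact Set.mem_iUnion.1 hx

lemma sum_indicator_apply {M : Type*} [AddCommMonoid M] (hR : IsMeasPartition R X) {k : Fin N}
    {x : β} (hx : x ∈ R k) (t : Fin N → β → M) : ∑ i, (R i).indicator (t i) x = t k x := by
  rw [Finset.sum_eq_single k, Set.indicator_of_mem hx]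
  · intro i _ hik
    exact Set.indicator_of_notMem (fun hxi => (hR.2.2 i k hik).subset ⟨hxi, hx⟩) _
  · simp

lemma quantMap_apply [AddCommMonoid β] (hR : IsMeasPartition R X) {k : Fin N} {x : β}
    (hx : x ∈ R k) (c : Fin N → β) : quantMap R c x = c k :=
  hR.sum_indicator_apply hx fun i _ => c i

lemma measurable_sum_indicator_const {M : Type*} [AddCommMonoid M] [MeasurableSpace M]
    [MeasurableAdd₂ M] (hR : IsMeasPartition R X) (a : Fin N → M) :
    Measurable fun x => ∑ i, (R i).indicator (fun _ => a i) x :=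
  Finset.measurable_sum _ fun i _ => measurable_const.indicator (hR.1 i)

lemma lintegral_eq_sum (hR : IsMeasPartition R X) {P : Measure β} (hPX : ∀ᵐ x ∂P, x ∈ X)
    (g : β → ℝ≥0∞) : ∫⁻ x, g x ∂P = ∑ k, ∫⁻ x in R k, g x ∂P := by
  have hdisj : Pairwise (Function.onFun Disjoint R) := fun i j hij =>
    Set.disjoint_iff_inter_eq_empty.2 (hR.2.2 i j hij)
  calc ∫⁻ x, g x ∂P = ∫⁻ x in X, g x ∂P := by rw [Measure.restrict_eq_self_of_ae_mem hPX]
    _ = _ := by rw [← hR.2.1, lintegral_iUnion hR.1 hdisj, tsum_fintype]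

lemma lintegral_sum_indicator_const (hR : IsMeasPartition R X) (P : Measure β)
    (a : Fin N → ℝ≥0∞) :
    ∫⁻ x, ∑ i, (R i).indicator (fun _ => a i) x ∂P = ∑ k, a k * P (R k) := by
  rw [lintegral_finsetSum _ fun i _ => measurable_const.indicator (hR.1 i)]
  exact Finset.sum_congr rfl fun k _ => lintegral_indicator_const (hR.1 k) _

end IsMeasPartition

lemma sum_ofReal_mul_measure {Ω ι : Type*} [MeasurableSpace Ω] [Fintype ι] (μ : Measure Ω)
    [IsFiniteMeasure μ] (s : ι → Set Ω) {a : ι → ℝ} (ha : ∀ i, 0 ≤ a i) :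
    ∑ i, ENNReal.ofReal (a i) * μ (s i) = ENNReal.ofReal (∑ i, (μ (s i)).toReal * a i) := by
  rw [ofReal_sum_of_nonneg fun i _ => mul_nonneg toReal_nonneg (ha i)]
  refine Finset.sum_congr rfl fun i _ => ?_
  rw [ofReal_mul toReal_nonneg, ofReal_toReal (measure_ne_top μ _), mul_comm]

section Propagation

variable {E F : Type*} [NormedAddCommGroup E] [MeasurableSpace E] [NormedAddCommGroup F]
  {ρ : ℝ} {N : ℕ} {X : Set E} {R : Fin N → Set E} {c : Fin N → E} {f : E → F}
  {α β : Fin N → ℝ} {αmax : ℝ}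

lemma ofReal_norm_sub_rpow_le_of_linearization (hR : IsMeasPartition R X)
    (hlin : ∀ k, ∀ x ∈ X, ‖f x - f (c k)‖ ^ ρ ≤ α k * ‖x - c k‖ ^ ρ + β k)
    (hαmax : ∀ k, α k ≤ αmax) {x y : E} (hx : x ∈ X) (hy : y ∈ X) :
    ENNReal.ofReal (‖f y - f (quantMap R c x)‖ ^ ρ) ≤
      ENNReal.ofReal αmax * ENNReal.ofReal (‖y - quantMap R c x‖ ^ ρ) +
        ∑ i, (R i).indicator (fun _ => ENNReal.ofReal (β i)) x := by
  obtain ⟨k, hk⟩ := hR.exists_mem hx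
  rw [hR.quantMap_apply hk, hR.sum_indicator_apply hk, ← ofReal_mul' (by positivity)]
  refine (ofReal_le_ofReal ((hlin k y hy).trans ?_)).trans ofReal_add_le
  gcongr
  exact hαmax k

lemma lintegral_ofReal_norm_sub_quantMap_rpow (hR : IsMeasPartition R X) {P : Measure E}
    (hPX : ∀ᵐ x ∂P, x ∈ X) :
    ∫⁻ x, ENNReal.ofReal (‖x - quantMap R c x‖ ^ ρ) ∂P =
      ∑ k, ∫⁻ x in R k, ENNReal.ofReal (‖x - c k‖ ^ ρ) ∂P := by
  rw [hR.lintegral_eq_sum hPX]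
  refine Finset.sum_congr rfl fun k _ => setLIntegral_congr_fun (hR.1 k) fun x hx => ?_
  rw [hR.quantMap_apply hx]

variable [BorelSpace E] [SecondCountableTopology E] [MeasurableSpace F] [BorelSpace F]
  [SecondCountableTopology F] {P Q : Measure E}

theorem optimalCost_map_quantMap_le_of_mem_couplings (hρ : 1 ≤ ρ) (hPX : ∀ᵐ x ∂P, x ∈ X)
    (hQX : ∀ᵐ x ∂Q, x ∈ X) (hR : IsMeasPartition R X) (hf : Measurable f)
    (hlin : ∀ k, ∀ x ∈ X, ‖f x - f (c k)‖ ^ ρ ≤ α k * ‖x - c k‖ ^ ρ + β k)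
    (hαmax : ∀ k, α k ≤ αmax) {π : Measure (E × E)} (hπ : π ∈ Couplings P Q) :
    optimalCost ρ (Q.map f) ((P.map (quantMap R c)).map f) ≤
      ENNReal.ofReal αmax * (transportCost ρ π ^ (1 / ρ) +
        (∑ k, ∫⁻ x in R k, ENNReal.ofReal (‖x - c k‖ ^ ρ) ∂P) ^ (1 / ρ)) ^ ρ +
        ∑ k, ENNReal.ofReal (β k) * P (R k) := by
  set Δ := quantMap R c
  set b : E → ℝ≥0∞ := fun x => ∑ i, (R i).indicator (fun _ => ENNReal.ofReal (β i)) x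
  have hΔ : Measurable Δ := hR.measurable_sum_indicator_const c
  have hb : Measurable b := hR.measurable_sum_indicator_const _
  have hdist : Measurable fun x => ENNReal.ofReal (‖x - Δ x‖ ^ ρ) := by fun_prop
  have hcoupling := map_swap_mem_couplings hπ hf (hf.comp hΔ)
  rw [← Measure.map_map hf hΔ] at hcoupling
  have hminkowski : ∫⁻ p, ENNReal.ofReal (‖p.2 - Δ p.1‖ ^ ρ) ∂π ≤
      (transportCost ρ π ^ (1 / ρ) +
        (∫⁻ p, ENNReal.ofReal (‖p.1 - Δ p.1‖ ^ ρ) ∂π) ^ (1 / ρ)) ^ ρ := by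
    have hcost : ∫⁻ p, ENNReal.ofReal (‖p.2 - p.1‖ ^ ρ) ∂π = transportCost ρ π :=
      lintegral_congr fun p => by rw [norm_sub_rev]
    rw [← hcost]
    exact lintegral_ofReal_norm_sub_rpow_le hρ measurable_snd measurable_fst
      (hΔ.comp measurable_fst)
  calc optimalCost ρ (Q.map f) ((P.map Δ).map f)
      ≤ ∫⁻ p, ENNReal.ofReal (‖f p.2 - f (Δ p.1)‖ ^ ρ) ∂π := by
        refine (optimalCost_le_transportCost hcoupling).trans_eq ?_
        rw [transportCost, lintegral_map (by fun_prop) (by fun_prop)]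
        rfl
    _ ≤ ∫⁻ p, ENNReal.ofReal αmax * ENNReal.ofReal (‖p.2 - Δ p.1‖ ^ ρ) + b p.1 ∂π := by
        refine lintegral_mono_ae ?_
        filter_upwards [ae_fst_of_mem_couplings hπ hPX, ae_snd_of_mem_couplings hπ hQX]
          with p hx hy
        exact ofReal_norm_sub_rpow_le_of_linearization hR hlin hαmax hx hy
    _ = ENNReal.ofReal αmax * ∫⁻ p, ENNReal.ofReal (‖p.2 - Δ p.1‖ ^ ρ) ∂π + ∫⁻ x, b x ∂P := by
        rw [lintegral_add_left (by fun_prop), lintegral_const_mul _ (by fun_prop),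
          lintegral_comp_fst_of_mem_couplings hπ hb]
    _ ≤ _ := by
        rw [hR.lintegral_sum_indicator_const, ← lintegral_ofReal_norm_sub_quantMap_rpow hR hPX,
          ← lintegral_comp_fst_of_mem_couplings hπ hdist]
        gcongr

theorem optimalCost_map_quantMap_le [IsProbabilityMeasure P] [IsProbabilityMeasure Q]
    (hρ : 1 ≤ ρ) (hPX : ∀ᵐ x ∂P, x ∈ X) (hQX : ∀ᵐ x ∂Q, x ∈ X) (hR : IsMeasPartition R X)
    (hf : Measurable f) (hlin : ∀ k, ∀ x ∈ X, ‖f x - f (c k)‖ ^ ρ ≤ α k * ‖x - c k‖ ^ ρ + β k)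
    (hαmax : ∀ k, α k ≤ αmax) {t : ℝ≥0∞} (ht : optimalCost ρ P Q ≤ t) :
    optimalCost ρ (Q.map f) ((P.map (quantMap R c)).map f) ≤
      ENNReal.ofReal αmax * (t ^ (1 / ρ) +
        (∑ k, ∫⁻ x in R k, ENNReal.ofReal (‖x - c k‖ ^ ρ) ∂P) ^ (1 / ρ)) ^ ρ +
        ∑ k, ENNReal.ofReal (β k) * P (R k) := by
  set G : ℝ≥0∞ → ℝ≥0∞ := fun s => ENNReal.ofReal αmax * (s ^ (1 / ρ) +
    (∑ k, ∫⁻ x in R k, ENNReal.ofReal (‖x - c k‖ ^ ρ) ∂P) ^ (1 / ρ)) ^ ρ +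
    ∑ k, ENNReal.ofReal (β k) * P (R k)
  have hG : Monotone G := fun _ _ hst => by
    dsimp only [G]
    gcongr
  have hGc : Continuous G :=
    ((ENNReal.continuous_const_mul ofReal_ne_top).comp
      (continuous_rpow_const.comp (continuous_rpow_const.add continuous_const))).add
      continuous_const
  exact (le_map_optimalCost hG hGc fun π hπ =>
    optimalCost_map_quantMap_le_of_mem_couplings hρ hPX hQX hR hf hlin hαmax hπ).trans (hG ht)

end Propagation

theorem stmt3_general {d q N : ℕ} (ρ : ℝ) (hρ : 1 ≤ ρ) (θ : ℝ) (hθ : 0 ≤ θ)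
    (X : Set (Euc d)) (hXm : MeasurableSet X)
    (P : Measure (Euc d)) (hP : IsProbabilityMeasure P) (hPX : P X = 1)
    (hPm : HasFiniteMoment ρ P)
    (R : Fin N → Set (Euc d)) (hR : IsMeasPartition R X)
    (c : Fin N → Euc d)
    (f : Euc d → Euc q) (hf : Measurable f)
    (α β : Fin N → ℝ) (hα : ∀ k, 0 ≤ α k) (hβ : ∀ k, 0 ≤ β k)
    (hlin : ∀ k, ∀ x ∈ X, ‖f x - f (c k)‖ ^ ρ ≤ α k * ‖x - c k‖ ^ ρ + β k)
    (αmax : ℝ) (hαmax : IsGreatest (Set.range α) αmax)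
    (θd : ℝ) (hθd : θd = (∑ k, ∫ x in R k, ‖x - c k‖ ^ ρ ∂P) ^ (1/ρ)) :
    ∀ Q : Measure (Euc d), IsProbabilityMeasure Q → Q X = 1 → HasFiniteMoment ρ Q →
      Wass ρ P Q ≤ θ → HasFiniteMoment ρ (Q.map f) →
      Wass ρ (Q.map f) ((P.map (quantMap R c)).map f) ≤
        (αmax * (θ + θd) ^ ρ + ∑ k, (P (R k)).toReal * β k) ^ (1/ρ) := by
  intro Q hQ hQX hQm hW _
  have hρ0 : 0 < ρ := zero_lt_one.trans_le hρ
  have hPX' : ∀ᵐ x ∂P, x ∈ X :=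
    (ae_mem_iff_measure_eq hXm.nullMeasurableSet).2 (hPX.trans measure_univ.symm)
  have hQX' : ∀ᵐ x ∂Q, x ∈ X :=
    (ae_mem_iff_measure_eq hXm.nullMeasurableSet).2 (hQX.trans measure_univ.symm)
  have hαmax0 : 0 ≤ αmax := let ⟨k, hk⟩ := hαmax.1; hk ▸ hα k
  have hθd0 : 0 ≤ θd := hθd ▸ by positivity
  have hB0 : 0 ≤ ∑ k, (P (R k)).toReal * β k :=
    Finset.sum_nonneg fun k _ => mul_nonneg toReal_nonneg (hβ k)
  have hθρ : ENNReal.ofReal (θ ^ ρ) ^ (1 / ρ) = ENNReal.ofReal θ := by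
    rw [ofReal_rpow_of_nonneg (by positivity) (by positivity), ← Real.rpow_mul hθ,
      mul_one_div_cancel hρ0.ne', Real.rpow_one]
  have hθd' : (∑ k, ∫⁻ x in R k, ENNReal.ofReal (‖x - c k‖ ^ ρ) ∂P) ^ (1 / ρ) =
      ENNReal.ofReal θd := by
    rw [hθd, ← ofReal_sum_setIntegral_norm_sub_rpow hρ hPm,
      ofReal_rpow_of_nonneg (by positivity) (by positivity)]
  have hcost := optimalCost_map_quantMap_le hρ hPX' hQX' hR hf hlin (fun k => hαmax.2 ⟨k, rfl⟩)
    (optimalCost_le_of_Wass_le hρ0 (optimalCost_lt_top hρ hPm hQm).ne hW)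
  rw [hθρ, hθd', sum_ofReal_mul_measure P R hβ, ← ofReal_add hθ hθd0,
    ofReal_rpow_of_nonneg (by positivity) hρ0.le, ← ofReal_mul hαmax0,
    ← ofReal_add (by positivity) hB0] at hcost
  exact Wass_le_of_optimalCost_le hρ0.le (add_nonneg (by positivity) hB0) hcost

/-- Theorem: uncertainty propagation of ambiguity sets. With
`π_k = P(R_k)`, linearization coefficients `α_k, β_k ≥ 0` such that
`‖f(x) - f(c_k)‖^ρ ≤ α_k ‖x - c_k‖^ρ + β_k` for all `x ∈ X`,
`θ_d = (Σ_k ∫_{R_k} ‖x - c_k‖^ρ dP)^{1/ρ}` and `α_max = max_k α_k`, every `Q` in the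
Wasserstein ball `B_θ(P)` satisfies
`W_ρ(f#Q, f#Δ_{R,C}#P) ≤ (α_max (θ + θ_d)^ρ + Σ_k π_k β_k)^{1/ρ}`. -/
theorem stmt3 {d q N : ℕ} (ρ : ℝ) (hρ : 1 ≤ ρ) (θ : ℝ) (hθ : 0 ≤ θ)
    (X : Set (Euc d)) (hXm : MeasurableSet X) (Y : Set (Euc q))
    (P : Measure (Euc d)) (hP : IsProbabilityMeasure P) (hPX : P X = 1)
    (hPm : HasFiniteMoment ρ P)
    (R : Fin N → Set (Euc d)) (hR : IsMeasPartition R X)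
    (c : Fin N → Euc d) (hc : ∀ k, c k ∈ X)
    (f : Euc d → Euc q) (hf : Measurable f) (hfXY : Set.MapsTo f X Y)
    (hfm : HasFiniteMoment ρ ((P.map (quantMap R c)).map f))
    (α β : Fin N → ℝ) (hα : ∀ k, 0 ≤ α k) (hβ : ∀ k, 0 ≤ β k)
    (hlin : ∀ k, ∀ x ∈ X, ‖f x - f (c k)‖ ^ ρ ≤ α k * ‖x - c k‖ ^ ρ + β k)
    (αmax : ℝ) (hαmax : IsGreatest (Set.range α) αmax)
    (θd : ℝ) (hθd : θd = (∑ k, ∫ x in R k, ‖x - c k‖ ^ ρ ∂P) ^ (1/ρ)) :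
    ∀ Q : Measure (Euc d), IsProbabilityMeasure Q → Q X = 1 → HasFiniteMoment ρ Q →
      Wass ρ P Q ≤ θ → HasFiniteMoment ρ (Q.map f) →
      Wass ρ (Q.map f) ((P.map (quantMap R c)).map f) ≤
        (αmax * (θ + θd) ^ ρ + ∑ k, (P (R k)).toReal * β k) ^ (1/ρ) :=
  stmt3_general ρ hρ θ hθ X hXm P hP hPX hPm R hR c f hf α β hα hβ hlin αmax hαmax θd hθd
end
end

section
/- Let X ⊆ ℝ^d, ρ ≥ 1, P a Borel probability measure on X with finite ρ-th moment, R = {R_1,…,R_N} a measurable partition of X, and C = {c_1,…,c_N} ⊂ X. Let f : X → Y ⊆ ℝ^q be measurable, and for each k let π_k := P(R_k) and let α_k, β_k ≥ 0 satisfy ‖f(x) − f(c_k)‖^ρ ≤ α_k ‖x − c_k‖^ρ + β_k for all x ∈ R_k (a local linearization, required only on the region R_k). Then W_ρ(f#P, f#Δ_{R,C}#P) ≤ ( Σ_{k=1}^N α_k ∫_{R_k} ‖x − c_k‖^ρ dP(x) + Σ_{k=1}^N π_k β_k )^{1/ρ}. -/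
open MeasureTheory ENNReal

noncomputable section

/-! Couple `f#P` with `f#Δ#P` through `P` itself, by `x ↦ (f x, f (Δ x))`. On `R_k` the
quantizer is constant, `Δ x = c_k`, so the transport cost `‖f x - f (Δ x)‖^ρ` of this coupling is
dominated `P`-a.e. by the step function `Σ_k 1_{R_k}(x) (α_k ‖x - c_k‖^ρ + β_k)`, whose integral
is the base of the right-hand side. -/

open Function

theorem Finset.sum_indicator_eq_of_mem {ι α M : Type*} [Fintype ι] [AddCommMonoid M]
    {s : ι → Set α} (hs : Pairwise (Disjoint on s)) (g : ι → α → M) {k : ι} {x : α}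
    (hx : x ∈ s k) : ∑ i, (s i).indicator (g i) x = g k x := by
  rw [Finset.sum_eq_single k (fun i _ hik => Set.indicator_of_notMem
      (Set.disjoint_left.mp (hs hik.symm) hx) _) (by simp), Set.indicator_of_mem hx]

theorem quantMap_eq_of_mem {β : Type*} [AddCommMonoid β] {N : ℕ} {R : Fin N → Set β}
    (hR : Pairwise (Disjoint on R)) (c : Fin N → β) {k : Fin N} {x : β} (hx : x ∈ R k) :
    quantMap R c x = c k :=
  Finset.sum_indicator_eq_of_mem hR _ hx

theorem measurable_quantMap {β : Type*} [MeasurableSpace β] [AddCommMonoid β]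
    [MeasurableAdd₂ β] {N : ℕ} {R : Fin N → Set β} (hR : ∀ i, MeasurableSet (R i))
    (c : Fin N → β) : Measurable (quantMap R c) :=
  Finset.measurable_sum _ fun i _ => measurable_const.indicator (hR i)

theorem HasFiniteMoment.memLp {β : Type*} [MeasurableSpace β] [NormedAddCommGroup β]
    [OpensMeasurableSpace β] [SecondCountableTopology β] {ρ : ℝ} (hρ : 0 < ρ) {μ : Measure β}
    (hμ : HasFiniteMoment ρ μ) : MemLp id (ENNReal.ofReal ρ) μ := by
  refine ⟨measurable_id.aestronglyMeasurable,
    (eLpNorm_lt_top_iff_lintegral_rpow_enorm_lt_top (by simpa using hρ) ofReal_ne_top).mpr ?_⟩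
  simpa [toReal_ofReal hρ.le, ← ofReal_norm, ofReal_rpow_of_nonneg (norm_nonneg _) hρ.le]
    using hμ.lt_top

theorem HasFiniteMoment.integrable_norm_sub_rpow {β : Type*} [MeasurableSpace β]
    [NormedAddCommGroup β] [OpensMeasurableSpace β] [SecondCountableTopology β]
    {ρ : ℝ} (hρ : 0 < ρ) {μ : Measure β} [IsFiniteMeasure μ] (hμ : HasFiniteMoment ρ μ)
    (c : β) : Integrable (fun x => ‖x - c‖ ^ ρ) μ := by
  simpa [toReal_ofReal hρ.le] using
    ((hμ.memLp hρ).sub (memLp_const c)).integrable_norm_rpow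
      (by simpa using hρ) ofReal_ne_top

theorem map_prodMk_mem_Couplings {α β : Type*} [MeasurableSpace α] [MeasurableSpace β]
    (μ : Measure α) [IsProbabilityMeasure μ] {g h : α → β} (hg : Measurable g)
    (hh : Measurable h) : μ.map (fun x => (g x, h x)) ∈ Couplings (μ.map g) (μ.map h) :=
  ⟨Measure.isProbabilityMeasure_map (hg.prodMk hh).aemeasurable,
    by rw [Measure.map_map measurable_fst (hg.prodMk hh)]; rfl,
    by rw [Measure.map_map measurable_snd (hg.prodMk hh)]; rfl⟩

theorem Wass_le_of_mem_Couplings {β : Type*} [MeasurableSpace β] [NormedAddCommGroup β]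
    {ρ : ℝ} (hρ : 0 ≤ ρ) {μ ν : Measure β} {γ : Measure (β × β)} (hγ : γ ∈ Couplings μ ν)
    {B : ℝ} (hB : 0 ≤ B) (hcost : ∫⁻ p, ENNReal.ofReal (‖p.1 - p.2‖ ^ ρ) ∂γ ≤ ENNReal.ofReal B) :
    Wass ρ μ ν ≤ B ^ (1 / ρ) :=
  Real.rpow_le_rpow toReal_nonneg (toReal_le_of_le_ofReal hB ((iInf₂_le γ hγ).trans hcost))
    (by positivity)

theorem Wass_map_le_integral_of_ae_le {α β : Type*} [MeasurableSpace α] [MeasurableSpace β]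
    [NormedAddCommGroup β] [BorelSpace β] [SecondCountableTopology β]
    {ρ : ℝ} (hρ : 0 ≤ ρ) (μ : Measure α) [IsProbabilityMeasure μ] {g h : α → β}
    (hg : Measurable g) (hh : Measurable h) {u : α → ℝ} (hu : Integrable u μ)
    (hle : ∀ᵐ x ∂μ, ‖g x - h x‖ ^ ρ ≤ u x) :
    Wass ρ (μ.map g) (μ.map h) ≤ (∫ x, u x ∂μ) ^ (1 / ρ) := by
  have hu_nonneg : 0 ≤ᵐ[μ] u :=
    hle.mono fun x hx => (Real.rpow_nonneg (norm_nonneg _) ρ).trans hx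
  refine Wass_le_of_mem_Couplings hρ (map_prodMk_mem_Couplings μ hg hh)
    (integral_nonneg_of_ae hu_nonneg) ?_
  rw [lintegral_map (by fun_prop) (hg.prodMk hh),
    ofReal_integral_eq_lintegral_ofReal hu hu_nonneg]
  exact lintegral_mono_ae (hle.mono fun x hx => ofReal_le_ofReal hx)

theorem Wass_map_map_quantMap_le {E F : Type*} [NormedAddCommGroup E] [MeasurableSpace E]
    [BorelSpace E] [SecondCountableTopology E] [NormedAddCommGroup F] [MeasurableSpace F]
    [BorelSpace F] [SecondCountableTopology F] {ρ : ℝ} (hρ : 0 < ρ) (P : Measure E)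
    [IsProbabilityMeasure P] (hPm : HasFiniteMoment ρ P) {N : ℕ} {R : Fin N → Set E}
    (hRm : ∀ i, MeasurableSet (R i)) (hRd : Pairwise (Disjoint on R))
    (hcover : ∀ᵐ x ∂P, x ∈ ⋃ i, R i) (c : Fin N → E) {f : E → F} (hf : Measurable f)
    (α β : Fin N → ℝ)
    (hlin : ∀ k, ∀ x ∈ R k, ‖f x - f (c k)‖ ^ ρ ≤ α k * ‖x - c k‖ ^ ρ + β k) :
    Wass ρ (P.map f) ((P.map (quantMap R c)).map f) ≤
      (∑ k, α k * ∫ x in R k, ‖x - c k‖ ^ ρ ∂P +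
        ∑ k, (P (R k)).toReal * β k) ^ (1/ρ) := by
  set bound : Fin N → E → ℝ := fun k x => α k * ‖x - c k‖ ^ ρ + β k
  have hmoment : ∀ k, Integrable (fun x => ‖x - c k‖ ^ ρ) P :=
    fun k => hPm.integrable_norm_sub_rpow hρ (c k)
  have hbound_int : ∀ k, Integrable (bound k) P :=
    fun k => ((hmoment k).const_mul (α k)).add (integrable_const (β k))
  have hbound_integral : ∀ k, ∫ x in R k, bound k x ∂P =
      α k * ∫ x in R k, ‖x - c k‖ ^ ρ ∂P + (P (R k)).toReal * β k := fun k => by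
    rw [integral_add ((hmoment k).integrableOn.const_mul (α k)) (integrable_const _),
      integral_const_mul, setIntegral_const, smul_eq_mul, measureReal_def]
  have hle : ∀ᵐ x ∂P, ‖f x - f (quantMap R c x)‖ ^ ρ ≤ ∑ k, (R k).indicator (bound k) x := by
    filter_upwards [hcover] with x hx
    obtain ⟨k, hk⟩ := Set.mem_iUnion.mp hx
    rw [quantMap_eq_of_mem hRd c hk, Finset.sum_indicator_eq_of_mem hRd bound hk]
    exact hlin k x hk
  rw [Measure.map_map hf (measurable_quantMap hRm c)]
  convert Wass_map_le_integral_of_ae_le hρ.le P hf (hf.comp (measurable_quantMap hRm c))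
    (integrable_finsetSum _ fun k _ => (hbound_int k).indicator (hRm k)) hle using 2
  rw [integral_finsetSum _ fun k _ => (hbound_int k).indicator (hRm k), ← Finset.sum_add_distrib]
  exact Finset.sum_congr rfl fun k _ => by rw [integral_indicator (hRm k), hbound_integral k]

theorem stmt6_general {d q N : ℕ} (ρ : ℝ) (hρ : 1 ≤ ρ)
    (X : Set (Euc d))
    (P : Measure (Euc d)) (hP : IsProbabilityMeasure P) (hPX : P X = 1)
    (hPm : HasFiniteMoment ρ P)
    (R : Fin N → Set (Euc d)) (hR : IsMeasPartition R X)
    (c : Fin N → Euc d)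
    (f : Euc d → Euc q) (hf : Measurable f)
    (α β : Fin N → ℝ)
    (hlin : ∀ k, ∀ x ∈ R k, ‖f x - f (c k)‖ ^ ρ ≤ α k * ‖x - c k‖ ^ ρ + β k) :
    Wass ρ (P.map f) ((P.map (quantMap R c)).map f) ≤
      (∑ k, α k * ∫ x in R k, ‖x - c k‖ ^ ρ ∂P +
        ∑ k, (P (R k)).toReal * β k) ^ (1/ρ) := by
  obtain ⟨hRm, rfl, hRd⟩ := hR
  have hcover : ∀ᵐ x ∂P, x ∈ ⋃ i, R i :=
    mem_ae_iff.mpr ((prob_compl_eq_zero_iff (MeasurableSet.iUnion hRm)).mpr hPX)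
  exact Wass_map_map_quantMap_le (by linarith) P hPm hRm
    (fun i j hij => Set.disjoint_iff_inter_eq_empty.mpr (hRd i j hij)) hcover c hf α β hlin

/-- Theorem: uncertainty propagation under no ambiguity. With local
linearization coefficients `α_k, β_k ≥ 0` such that
`‖f(x) - f(c_k)‖^ρ ≤ α_k ‖x - c_k‖^ρ + β_k` for all `x ∈ R_k`, and `π_k = P(R_k)`,
`W_ρ(f#P, f#Δ_{R,C}#P) ≤ (Σ_k α_k ∫_{R_k} ‖x - c_k‖^ρ dP + Σ_k π_k β_k)^{1/ρ}`. -/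
theorem stmt6 {d q N : ℕ} (ρ : ℝ) (hρ : 1 ≤ ρ)
    (X : Set (Euc d)) (hXm : MeasurableSet X) (Y : Set (Euc q))
    (P : Measure (Euc d)) (hP : IsProbabilityMeasure P) (hPX : P X = 1)
    (hPm : HasFiniteMoment ρ P)
    (R : Fin N → Set (Euc d)) (hR : IsMeasPartition R X)
    (c : Fin N → Euc d) (hc : ∀ k, c k ∈ X)
    (f : Euc d → Euc q) (hf : Measurable f) (hfXY : Set.MapsTo f X Y)
    (hfPm : HasFiniteMoment ρ (P.map f))
    (hfΔm : HasFiniteMoment ρ ((P.map (quantMap R c)).map f))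
    (α β : Fin N → ℝ) (hα : ∀ k, 0 ≤ α k) (hβ : ∀ k, 0 ≤ β k)
    (hlin : ∀ k, ∀ x ∈ R k, ‖f x - f (c k)‖ ^ ρ ≤ α k * ‖x - c k‖ ^ ρ + β k) :
    Wass ρ (P.map f) ((P.map (quantMap R c)).map f) ≤
      (∑ k, α k * ∫ x in R k, ‖x - c k‖ ^ ρ ∂P +
        ∑ k, (P (R k)).toReal * β k) ^ (1/ρ) :=
  stmt6_general ρ hρ X P hP hPX hPm R hR c f hf α β hlin
end
end
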